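/- Let Z₀ be the inverse of the Gram matrix S of the Weyl-invariant inner product for E₆ (as in the paper's Table 1). Then for an integer b, the matrix b·Z₀ is integral if and only if 3 divides b; hence the centralizer of the natural symplectic representation of W(E₆) in Sp(12, ℤ) is isomorphic to Γ⁰(3). -/

import Mathlib

/-!
Z₀ is the inverse of the integral E₆ Cartan matrix C, whose determinant is 3. Hence 3Z₀ is
integral, and since it has an entry prime to 3 (Z₀ has the entry 2/3), bZ₀ is integral exactly
when 3 ∣ b. The other off-diagonal block cZ₀⁻¹ = cC is integral for every c.
-/

open Matrix

/-- The matrix Z₀ = S⁻¹ for E₆: the inverse of the Gram matrix of the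
Weyl-invariant inner product on the E₆ root lattice. -/
noncomputable def Z0E6 : Matrix (Fin 6) (Fin 6) ℝ :=
  !![4/3, 1, 5/3, 2, 4/3, 2/3;
     1,   2, 2,   3, 2,   1;
     5/3, 2, 10/3,4, 8/3, 4/3;
     2,   3, 4,   6, 4,   2;
     4/3, 2, 8/3, 4, 10/3,5/3;
     2/3, 1, 4/3, 2, 5/3, 4/3]

section IntegralMultiples

variable {K m n : Type*} [CommRing K]

theorem exists_intCast_eq_mul_map_intCast (c : ℤ) (N : Matrix m n ℤ) (i : m) (j : n) :
    ∃ k : ℤ, (c : K) * N.map (Int.cast) i j = k :=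
  ⟨c * N i j, by simp⟩

theorem forall_exists_intCast_eq_mul_iff_dvd [CharZero K] {p : ℕ} (hp : p.Prime)
    {M : Matrix m n K} {N : Matrix m n ℤ} (hN : (p : K) • M = N.map (Int.cast))
    {i₀ : m} {j₀ : n} (hN₀ : ¬ (p : ℤ) ∣ N i₀ j₀) (b : ℤ) :
    (∀ i j, ∃ k : ℤ, (b : K) * M i j = k) ↔ (p : ℤ) ∣ b := by
  have hM : ∀ i j, (p : K) * M i j = N i j := fun i j => by
    simpa using congrFun (congrFun hN i) j
  constructor
  · intro h
    obtain ⟨k, hk⟩ := h i₀ j₀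
    have hdvd : (p : ℤ) ∣ b * N i₀ j₀ := ⟨k, by
      have hK : ((b * N i₀ j₀ : ℤ) : K) = ((p * k : ℤ) : K) := by
        push_cast; rw [← hM, ← hk]; ring
      exact_mod_cast hK⟩
    exact ((Nat.prime_iff_prime_int.mp hp).dvd_or_dvd hdvd).resolve_right hN₀
  · rintro ⟨q, rfl⟩ i j
    exact ⟨q * N i j, by push_cast; rw [← hM]; ring⟩

end IntegralMultiples

/-- The adjugate of `CartanMatrix.E₆`. -/
def threeZ0E6 : Matrix (Fin 6) (Fin 6) ℤ :=
  !![4, 3, 5, 6, 4, 2;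
     3, 6, 6, 9, 6, 3;
     5, 6, 10, 12, 8, 4;
     6, 9, 12, 18, 12, 6;
     4, 6, 8, 12, 10, 5;
     2, 3, 4, 6, 5, 4]

theorem three_smul_Z0E6 : (3 : ℝ) • Z0E6 = threeZ0E6.map (Int.cast) := by
  ext i j
  fin_cases i <;> fin_cases j <;> norm_num [Z0E6, threeZ0E6]

theorem Z0E6_mul_E₆ : Z0E6 * CartanMatrix.E₆.map (Int.cast) = 1 := by
  ext i j
  fin_cases i <;> fin_cases j <;>
    norm_num [Z0E6, CartanMatrix.E₆, mul_apply, Fin.sum_univ_succ, one_apply]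

theorem inv_Z0E6 : Z0E6⁻¹ = CartanMatrix.E₆.map (Int.cast) :=
  inv_eq_right_inv Z0E6_mul_E₆

/-- For b ∈ ℤ, the matrix b·Z₀ (Z₀ the inverse Gram matrix for E₆)
is integral iff 3 ∣ b; hence the centralizer of the natural symplectic
representation of W(E₆) in Sp(12,ℤ), consisting of the block matrices
[[aI, bZ₀],[cZ₀⁻¹, dI]] with ad−bc = 1 and integral off-diagonal blocks, is
isomorphic to Γ⁰(3) = {(a,b,c,d) ∈ SL₂(ℤ) : 3 ∣ b}. -/
theorem E6_centralizer_is_Gamma0_3 (b : ℤ) :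
    ((∀ i j : Fin 6, ∃ k : ℤ, (b : ℝ) * Z0E6 i j = (k : ℝ)) ↔ (3 : ℤ) ∣ b) ∧
    (∀ a c d : ℤ, a * d - b * c = 1 →
      (((∀ i j : Fin 6, ∃ k : ℤ, (b : ℝ) * Z0E6 i j = (k : ℝ)) ∧
        (∀ i j : Fin 6, ∃ k : ℤ, (c : ℝ) * Z0E6⁻¹ i j = (k : ℝ))) ↔ (3 : ℤ) ∣ b)) := by
  have hZ0 : (∀ i j : Fin 6, ∃ k : ℤ, (b : ℝ) * Z0E6 i j = (k : ℝ)) ↔ (3 : ℤ) ∣ b :=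
    forall_exists_intCast_eq_mul_iff_dvd Nat.prime_three (by exact_mod_cast three_smul_Z0E6)
      (i₀ := 0) (j₀ := 5) (by decide) b
  refine ⟨hZ0, fun a c d _ => ⟨fun h => hZ0.mp h.1, fun hb => ⟨hZ0.mpr hb, ?_⟩⟩⟩
  rw [inv_Z0E6]
  exact exists_intCast_eq_mul_map_intCast c _
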